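/- For every positive integer r and every positive integer Ω, there are only finitely many sparsely Schemmel totient numbers n of order r with ω(n) < Ω; equivalently, ω(n) → ∞ as n → ∞ along sparsely Schemmel totient numbers of order r. -/

import Mathlib

/-- The Schemmel totient function of order `r` (multiplicative, with
`S r (p^a) = p^(a-1) * (p - r)`; note `p - r = 0` in `ℕ` when `p ≤ r`). -/
def S (r n : ℕ) : ℕ := ∏ q ∈ n.primeFactors, q ^ (n.factorization q - 1) * (q - r)

/-- `b r` is the number of primes `≤ r`. -/
def b (r : ℕ) : ℕ := ((Finset.range (r + 1)).filter Nat.Prime).card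

/-- `p i` is the `i`-th prime (`p 1 = 2`, `p 2 = 3`, ...). -/
noncomputable def p (i : ℕ) : ℕ := Nat.nth Nat.Prime (i - 1)

/-- `n` is a sparsely Schemmel totient number of order `r`. -/
def SST (r n : ℕ) : Prop := 0 < S r n ∧ ∀ m : ℕ, n < m → 0 < S r m → S r n < S r m

/-- Jacobsthal function: the smallest `a` such that every `a` consecutive
integers contain one coprime to `N`. -/
noncomputable def J (N : ℕ) : ℕ := sInf {a : ℕ | ∀ x : ℕ, ∃ y ∈ Finset.Ico x (x + a), Nat.Coprime y N}

/-- `Pk k n` is the `k`-th largest prime divisor of `n` (or `0` if `ω(n) < k`). -/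
def Pk (k n : ℕ) : ℕ := ((n.primeFactors.sort (· ≤ ·)).reverse).getD (k - 1) 0

/-- `Qk r k n` is the `k`-th smallest prime greater than `r` not dividing `n`. -/
noncomputable def Qk (r k n : ℕ) : ℕ := Nat.nth (fun q : ℕ => q.Prime ∧ r < q ∧ ¬ q ∣ n) (k - 1)

/-- `Rn n` is `n` divided by the product of its distinct prime factors. -/
def Rn (n : ℕ) : ℕ := n / ∏ q ∈ n.primeFactors, q


/-!
If all prime factors `q` of `n` exceed `r` and there are fewer than `Ω` of them, then
`n ≤ (r + 1) ^ Ω * S r n`, because `q / (q - r) ≤ r + 1`. On the other hand, the divergence of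
`∑ 1 / q` over primes yields a finite set `T` of primes `> r` with
`∏_{q ∈ T} q / (q - r) ≥ 2 (r + 1) ^ Ω`, and for large `n` the interval `(n, 2 n]` contains
`m = (∏ T) * (r ! * k + 1)`, which has no prime factor `≤ r`. Then
`S r m ≤ m / (2 (r + 1) ^ Ω) ≤ n / (r + 1) ^ Ω ≤ S r n`, so `n` is not sparsely Schemmel totient.
-/

open Finset Nat

theorem one_add_sum_le_prod_one_add {ι R : Type*} [CommSemiring R] [PartialOrder R]
    [IsOrderedRing R] (s : Finset ι) {x : ι → R} (hx : ∀ i ∈ s, 0 ≤ x i) :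
    1 + ∑ i ∈ s, x i ≤ ∏ i ∈ s, (1 + x i) := by
  classical
  induction s using Finset.induction with
  | empty => simp
  | insert a s ha ih =>
    rw [prod_insert ha, sum_insert ha]
    have hxa : 0 ≤ x a := hx a (mem_insert_self a s)
    have hs : 0 ≤ ∑ i ∈ s, x i := sum_nonneg fun i hi => hx i (mem_insert_of_mem hi)
    calc 1 + (x a + ∑ i ∈ s, x i)
        ≤ 1 + (x a + ∑ i ∈ s, x i) + x a * ∑ i ∈ s, x i :=
          le_add_of_nonneg_right (mul_nonneg hxa hs)
      _ = (1 + x a) * (1 + ∑ i ∈ s, x i) := by ring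
      _ ≤ (1 + x a) * ∏ i ∈ s, (1 + x i) :=
          mul_le_mul_of_nonneg_left (ih fun i hi => hx i (mem_insert_of_mem hi))
            (add_nonneg zero_le_one hxa)

theorem exists_le_sum_inv_primes_gt (r : ℕ) (C : ℝ) :
    ∃ T : Finset ℕ, (∀ q ∈ T, q.Prime ∧ r < q) ∧ C ≤ ∑ q ∈ T, (q : ℝ)⁻¹ := by
  set g := Set.indicator {q : ℕ | q.Prime ∧ r < q} fun q => (q : ℝ)⁻¹
  have hg : ¬ Summable g := fun hg => not_summable_one_div_on_primes <|
    hg.of_norm_bounded_eventually_nat <| Filter.eventually_atTop.2 ⟨r + 1, fun q hq => by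
      by_cases hq' : q.Prime <;> simp [g, Set.indicator, hq', show r < q by omega]⟩
  have := (not_summable_iff_tendsto_nat_atTop_of_nonneg
    (Set.indicator_nonneg fun q _ => inv_nonneg.2 q.cast_nonneg)).1 hg
  obtain ⟨B, hB⟩ := (this.eventually_ge_atTop C).exists
  refine ⟨(range B).filter fun q => q.Prime ∧ r < q, fun q hq => (mem_filter.1 hq).2, ?_⟩
  simpa only [sum_filter, Set.indicator_apply, Set.mem_ofPred_eq] using hB

theorem exists_mul_prod_sub_le_prod {r : ℕ} (hr : 0 < r) (C : ℕ) :
    ∃ T : Finset ℕ, (∀ q ∈ T, q.Prime ∧ r < q) ∧ C * ∏ q ∈ T, (q - r) ≤ ∏ q ∈ T, q := by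
  obtain ⟨T, hT, hC⟩ := exists_le_sum_inv_primes_gt r C
  refine ⟨T, hT, ?_⟩
  have hrq : ∀ q ∈ T, (r : ℝ) < q := fun q hq => by exact_mod_cast (hT q hq).2
  have hsub : ∀ q ∈ T, (0 : ℝ) ≤ q - r := fun q hq => (sub_pos.2 (hrq q hq)).le
  have hfactor : ∀ q ∈ T, (1 + (q : ℝ)⁻¹) * (q - r) ≤ q := fun q hq => by
    have hq : (0 : ℝ) < q := (Nat.cast_nonneg r).trans_lt (hrq q hq)
    have : ((q : ℝ) - r) / q ≤ 1 := (div_le_one hq).2 (by linarith)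
    have h1 : (1 : ℝ) ≤ r := by exact_mod_cast hr
    rw [add_mul, one_mul, inv_mul_eq_div]
    linarith
  have key : (C : ℝ) * ∏ q ∈ T, ((q : ℝ) - r) ≤ ∏ q ∈ T, (q : ℝ) :=
    calc (C : ℝ) * ∏ q ∈ T, ((q : ℝ) - r)
        ≤ (1 + ∑ q ∈ T, (q : ℝ)⁻¹) * ∏ q ∈ T, ((q : ℝ) - r) := by
          gcongr
          · exact prod_nonneg hsub
          · linarith
      _ ≤ (∏ q ∈ T, (1 + (q : ℝ)⁻¹)) * ∏ q ∈ T, ((q : ℝ) - r) := by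
          gcongr
          · exact prod_nonneg hsub
          · exact one_add_sum_le_prod_one_add T fun q _ => inv_nonneg.2 q.cast_nonneg
      _ ≤ ∏ q ∈ T, (q : ℝ) := by
          rw [← prod_mul_distrib]
          exact prod_le_prod (fun q hq => mul_nonneg (by positivity) (hsub q hq)) hfactor
  rw [← Nat.cast_le (α := ℝ)]
  push_cast [prod_congr rfl fun q hq => Nat.cast_sub (hT q hq).2.le]
  exact key

theorem S_pos_iff {r n : ℕ} : 0 < S r n ↔ ∀ q ∈ n.primeFactors, r < q := by
  simp only [S, CanonicallyOrderedAdd.prod_pos, CanonicallyOrderedAdd.mul_pos]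
  refine forall₂_congr fun q hq => ?_
  have := (Nat.prime_of_mem_primeFactors hq).pos
  simp [pow_pos this]

theorem S_mul_prod_primeFactors (r : ℕ) {n : ℕ} (hn : n ≠ 0) :
    S r n * ∏ q ∈ n.primeFactors, q = n * ∏ q ∈ n.primeFactors, (q - r) := by
  have hn' : ∏ q ∈ n.primeFactors, q ^ n.factorization q = n := by
    simpa [Nat.prod_factorization_eq_prod_primeFactors] using Nat.prod_factorization_pow_eq_self hn
  calc S r n * ∏ q ∈ n.primeFactors, q
      = ∏ q ∈ n.primeFactors, q ^ n.factorization q * (q - r) := by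
        rw [S, ← prod_mul_distrib]
        refine prod_congr rfl fun q hq => ?_
        rw [mul_right_comm, pow_sub_one_mul (Finsupp.mem_support_iff.1 hq)]
    _ = n * ∏ q ∈ n.primeFactors, (q - r) := by rw [prod_mul_distrib, hn']

theorem le_pow_card_primeFactors_mul_S {r n : ℕ} (hS : 0 < S r n) :
    n ≤ (r + 1) ^ n.primeFactors.card * S r n := by
  rcases eq_or_ne n 0 with rfl | hn
  · exact Nat.zero_le _
  have hr := S_pos_iff.1 hS
  have hpos : 0 < ∏ q ∈ n.primeFactors, (q - r) :=
    prod_pos fun q hq => Nat.sub_pos_of_lt (hr q hq)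
  refine Nat.le_of_mul_le_mul_right ?_ hpos
  calc n * ∏ q ∈ n.primeFactors, (q - r) = S r n * ∏ q ∈ n.primeFactors, q :=
        (S_mul_prod_primeFactors r hn).symm
    _ ≤ S r n * ∏ q ∈ n.primeFactors, ((r + 1) * (q - r)) := by
        gcongr with q hq
        have := hr q hq
        nlinarith [Nat.sub_add_cancel this.le]
    _ = (r + 1) ^ n.primeFactors.card * S r n * ∏ q ∈ n.primeFactors, (q - r) := by
        rw [prod_mul_distrib, prod_const]; ring

theorem S_mul_prod_le_mul_prod_sub {r m : ℕ} (hm : m ≠ 0) {T : Finset ℕ}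
    (hT : T ⊆ m.primeFactors) : S r m * ∏ q ∈ T, q ≤ m * ∏ q ∈ T, (q - r) := by
  have hsplit (f : ℕ → ℕ) : (∏ q ∈ m.primeFactors \ T, f q) * ∏ q ∈ T, f q =
      ∏ q ∈ m.primeFactors, f q := prod_sdiff hT
  have hU : 0 < ∏ q ∈ m.primeFactors \ T, q :=
    prod_pos fun q hq => (Nat.prime_of_mem_primeFactors (mem_sdiff.1 hq).1).pos
  refine Nat.le_of_mul_le_mul_right ?_ hU
  calc (S r m * ∏ q ∈ T, q) * ∏ q ∈ m.primeFactors \ T, q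
      = m * ((∏ q ∈ m.primeFactors \ T, (q - r)) * ∏ q ∈ T, (q - r)) := by
        rw [mul_assoc, mul_comm (∏ q ∈ T, q), hsplit, hsplit, S_mul_prod_primeFactors r hm]
    _ ≤ m * ((∏ q ∈ m.primeFactors \ T, q) * ∏ q ∈ T, (q - r)) := by
        gcongr with q
        exact Nat.sub_le q r
    _ = (m * ∏ q ∈ T, (q - r)) * ∏ q ∈ m.primeFactors \ T, q := by ring

theorem exists_dvd_S_pos_between {r M : ℕ} (hM : 0 < S r M) (hM0 : M ≠ 0) (n : ℕ) :
    ∃ m, n < m ∧ m ≤ n + 2 * (M * r !) ∧ M ∣ m ∧ 0 < S r m := by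
  set k := n / (M * r !) + 1
  have hMr : 0 < M * r ! := Nat.mul_pos (Nat.pos_of_ne_zero hM0) (Nat.factorial_pos r)
  have hlt : n < M * r ! * k := Nat.lt_mul_div_succ n hMr
  have hle : M * r ! * k ≤ n + M * r ! := by
    rw [mul_add, mul_one]; exact Nat.add_le_add_right (Nat.mul_div_le n _) _
  have hMle : M ≤ M * r ! := Nat.le_mul_of_pos_right M (Nat.factorial_pos r)
  have hm : M * (r ! * k + 1) = M * r ! * k + M := by ring
  refine ⟨M * (r ! * k + 1), by omega, by omega, dvd_mul_right _ _, ?_⟩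
  refine S_pos_iff.2 fun q hq => ?_
  have hq' := Nat.prime_of_mem_primeFactors hq
  rcases (Nat.Prime.dvd_mul hq').1 (Nat.dvd_of_mem_primeFactors hq) with hqM | hqk
  · exact S_pos_iff.1 hM q (Nat.mem_primeFactors.2 ⟨hq', hqM, hM0⟩)
  · by_contra! hqr
    have := (Nat.dvd_add_right (dvd_mul_of_dvd_left (hq'.dvd_factorial.2 hqr) k)).1 hqk
    exact hq'.one_lt.ne' (Nat.dvd_one.1 this)

theorem stmt14_general (r Ω : ℕ) (hr : 0 < r) :
    {n : ℕ | SST r n ∧ n.primeFactors.card < Ω}.Finite := by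
  obtain ⟨T, hT, hTprod⟩ := exists_mul_prod_sub_le_prod hr (2 * (r + 1) ^ Ω)
  set M := ∏ q ∈ T, q
  have hM0 : M ≠ 0 := prod_ne_zero_iff.2 fun q hq => (hT q hq).1.ne_zero
  have hpfM : M.primeFactors = T := Nat.primeFactors_prod fun q hq => (hT q hq).1
  have hSM : 0 < S r M := S_pos_iff.2 fun q hq => (hT q (hpfM ▸ hq)).2
  refine (Set.finite_Iio (2 * (M * r !))).subset fun n ⟨hsst, hcard⟩ => Set.mem_Iio.2 ?_
  by_contra! hlarge
  obtain ⟨m, hnm, hmn, hMm, hSm⟩ := exists_dvd_S_pos_between hSM hM0 n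
  have hTm : T ⊆ m.primeFactors := hpfM ▸ Nat.primeFactors_mono hMm (by omega)
  have hn : n ≤ (r + 1) ^ Ω * S r n :=
    (le_pow_card_primeFactors_mul_S hsst.1).trans (by gcongr; omega)
  have hnM : n * M < n * M := calc n * M ≤ (r + 1) ^ Ω * S r n * M := by gcongr
    _ < (r + 1) ^ Ω * S r m * M :=
        Nat.mul_lt_mul_of_pos_right (by gcongr; exact hsst.2 m hnm hSm) (Nat.pos_of_ne_zero hM0)
    _ ≤ (r + 1) ^ Ω * (m * ∏ q ∈ T, (q - r)) := by
        rw [mul_assoc]; exact Nat.mul_le_mul_left _ (S_mul_prod_le_mul_prod_sub (by omega) hTm)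
    _ ≤ (r + 1) ^ Ω * (2 * n * ∏ q ∈ T, (q - r)) := by gcongr; omega
    _ = n * (2 * (r + 1) ^ Ω * ∏ q ∈ T, (q - r)) := by ring
    _ ≤ n * M := by gcongr
  exact lt_irrefl _ hnM

theorem stmt14 (r Ω : ℕ) (hr : 0 < r) (hΩ : 0 < Ω) :
    {n : ℕ | SST r n ∧ n.primeFactors.card < Ω}.Finite :=
  stmt14_general r Ω hr
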